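/- Assume b = e = 0 (with a, d ∈ ℝ arbitrary). Let u be a solution of the Longstaff–Schwartz equation on Ω, and let ε ∈ ℝ. Then the function w(x,y,t) = u( e^{-ε}x, e^{-ε}y, e^{-ε}t ) is also a solution of the Longstaff–Schwartz equation on Ω. -/

import Mathlib

/-- Partial derivative in `x`. -/
noncomputable def pdX (u : ℝ → ℝ → ℝ → ℝ) (x y t : ℝ) : ℝ := deriv (fun z => u z y t) x

/-- Partial derivative in `y`. -/
noncomputable def pdY (u : ℝ → ℝ → ℝ → ℝ) (x y t : ℝ) : ℝ := deriv (fun z => u x z t) y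

/-- Partial derivative in `t`. -/
noncomputable def pdT (u : ℝ → ℝ → ℝ → ℝ) (x y t : ℝ) : ℝ := deriv (fun z => u x y z) t

/-- Second partial derivative in `x`. -/
noncomputable def pdXX (u : ℝ → ℝ → ℝ → ℝ) (x y t : ℝ) : ℝ := deriv (fun z => pdX u z y t) x

/-- Second partial derivative in `y`. -/
noncomputable def pdYY (u : ℝ → ℝ → ℝ → ℝ) (x y t : ℝ) : ℝ := deriv (fun z => pdY u x z t) y

/-- The domain `Ω = {(x,y,t) : x > 0, y > 0}`. -/
def Omega : Set (ℝ × ℝ × ℝ) := {p | 0 < p.1 ∧ 0 < p.2.1}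

/-- The Longstaff–Schwartz (Kolmogorov backward) equation
`u_t = −((a−bx)·u_x + (d−ey)·u_y + (x/2)·u_xx + (y/2)·u_yy)` holds at the point `(x,y,t)`. -/
def LSEq (a b d e : ℝ) (u : ℝ → ℝ → ℝ → ℝ) (x y t : ℝ) : Prop :=
  pdT u x y t =
    -((a - b * x) * pdX u x y t + (d - e * y) * pdY u x y t +
      x / 2 * pdXX u x y t + y / 2 * pdYY u x y t)

/-- `u` is a solution of the Longstaff–Schwartz equation on `Ω`: it is C² on `Ω` and
satisfies the equation at every point of `Ω`. -/
def IsLSSolution (a b d e : ℝ) (u : ℝ → ℝ → ℝ → ℝ) : Prop :=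
  ContDiffOn ℝ 2 (fun p : ℝ × ℝ × ℝ => u p.1 p.2.1 p.2.2) Omega ∧
  ∀ x y t : ℝ, 0 < x → 0 < y → LSEq a b d e u x y t

/-! Dilating all variables by `c` multiplies `u_t`, `u_x`, `u_y` by `c` and `u_xx`, `u_yy` by
`c²`, while the coefficients `x/2`, `y/2` of the second-order terms absorb one factor `c`. Once
`b = e = 0` the first-order coefficients are constants, so both sides of the equation for the
dilated function are `c` times those for `u` at the dilated point. -/

noncomputable def dilate (c : ℝ) (u : ℝ → ℝ → ℝ → ℝ) : ℝ → ℝ → ℝ → ℝ :=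
  fun x y t => u (c * x) (c * y) (c * t)

section Dilate

variable (c : ℝ) (u : ℝ → ℝ → ℝ → ℝ) (x y t : ℝ)

theorem pdX_dilate : pdX (dilate c u) x y t = c * pdX u (c * x) (c * y) (c * t) :=
  deriv_comp_mul_left c (fun z => u z (c * y) (c * t)) x

theorem pdY_dilate : pdY (dilate c u) x y t = c * pdY u (c * x) (c * y) (c * t) :=
  deriv_comp_mul_left c (fun z => u (c * x) z (c * t)) y

theorem pdT_dilate : pdT (dilate c u) x y t = c * pdT u (c * x) (c * y) (c * t) :=
  deriv_comp_mul_left c (fun z => u (c * x) (c * y) z) t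

theorem pdXX_dilate : pdXX (dilate c u) x y t = c ^ 2 * pdXX u (c * x) (c * y) (c * t) := by
  have hchain := deriv_comp_mul_left c (fun z => pdX u z (c * y) (c * t)) x
  simp only [pdXX, pdX_dilate, deriv_const_mul_field, hchain, smul_eq_mul]
  ring

theorem pdYY_dilate : pdYY (dilate c u) x y t = c ^ 2 * pdYY u (c * x) (c * y) (c * t) := by
  have hchain := deriv_comp_mul_left c (fun z => pdY u (c * x) z (c * t)) y
  simp only [pdYY, pdY_dilate, deriv_const_mul_field, hchain, smul_eq_mul]
  ring

theorem LSEq.dilate {a d : ℝ} (h : LSEq a 0 d 0 u (c * x) (c * y) (c * t)) :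
    LSEq a 0 d 0 (dilate c u) x y t := by
  rw [LSEq] at h ⊢
  rw [pdT_dilate, pdX_dilate, pdY_dilate, pdXX_dilate, pdYY_dilate, h]
  ring

end Dilate

theorem mapsTo_smul_Omega {c : ℝ} (hc : 0 < c) : Set.MapsTo (c • ·) Omega Omega :=
  fun _ hp => ⟨mul_pos hc hp.1, mul_pos hc hp.2⟩

theorem IsLSSolution.dilate {a d c : ℝ} {u : ℝ → ℝ → ℝ → ℝ} (hu : IsLSSolution a 0 d 0 u)
    (hc : 0 < c) : IsLSSolution a 0 d 0 (dilate c u) :=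
  ⟨hu.1.comp (contDiff_const_smul c).contDiffOn (mapsTo_smul_Omega hc),
    fun x y t hx hy => (hu.2 _ _ _ (mul_pos hc hx) (mul_pos hc hy)).dilate c u x y t⟩

/-- Symmetry of the Longstaff–Schwartz equation when `b = e = 0` (subcase 2.4, group `G₂`):
scaling `(x,y,t) ↦ (e^{-ε}x, e^{-ε}y, e^{-ε}t)` maps solutions to solutions on `Ω`. -/
theorem ls_symmetry_b_e_zero_scaling (a b d e : ℝ) (hb : b = 0) (he : e = 0)
    (u : ℝ → ℝ → ℝ → ℝ) (hu : IsLSSolution a b d e u) (ε : ℝ) :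
    IsLSSolution a b d e
      (fun x y t => u (Real.exp (-ε) * x) (Real.exp (-ε) * y) (Real.exp (-ε) * t)) := by
  subst hb he
  exact hu.dilate (Real.exp_pos (-ε))
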